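/- arXiv:2602.11142 — 3 statements merged into one kernel-verified Lean document; each statement's English description precedes it below -/
import Mathlib

section
/- (RealNVP Lower Bound.) Let d L : ℕ and for each ℓ < L let I_ℓ ⊆ Fin d with d_ℓ = |I_ℓ|, and let s_ℓ, t_ℓ : EuclideanSpace ℝ (Fin d) → EuclideanSpace ℝ (Fin d) depend only on coordinates outside I_ℓ, with |s_ℓ(x)_i| ≤ S_ℓ for all i and ‖t_ℓ(x)‖₂ ≤ T_ℓ for all x, where S_ℓ, T_ℓ ≥ 0. Let g_ℓ be the inverse affine coupling layers, set x⁽⁰⁾ = a and x⁽ℓ⁺¹⁾ = g_ℓ x⁽ℓ⁾, and u = x⁽ᴸ⁾. Define the flow log-density at a by logπ(a) = log p_z(u) + ∑_{ℓ<L} (−∑_{i∈I_ℓ} (s_ℓ x⁽ℓ⁾)_i) = Real.log ((2π)^(−(d:ℝ)/2) * Real.exp (−‖u‖₂²/2)) − ∑_{ℓ<L} ∑_{i∈I_ℓ} (s_ℓ x⁽ℓ⁾)_i. Then for every a with ‖a‖₂ ≤ A_max: logπ(a) ≥ −B, i.e. Real.log ((2π)^(−(d:ℝ)/2) * Real.exp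 (−‖u‖₂²/2)) − ∑_{ℓ<L} ∑_{i∈I_ℓ} (s_ℓ x⁽ℓ⁾)_i ≥ −B, where B = (d/2) * Real.log (2π) + U_max²/2 + ∑_{ℓ<L} d_ℓ * S_ℓ and U_max = Real.exp (∑_{ℓ<L} S_ℓ) * (A_max + ∑_{ℓ<L} T_ℓ). -/
open scoped BigOperators


lemma eucl_norm_mono {d : ℕ} (v w : EuclideanSpace ℝ (Fin d))
    (h : ∀ i, |v i| ≤ |w i|) : ‖v‖ ≤ ‖w‖ := by
  rw [EuclideanSpace.norm_eq, EuclideanSpace.norm_eq]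
  apply Real.sqrt_le_sqrt
  apply Finset.sum_le_sum
  intro i _
  simp only [Real.norm_eq_abs]
  exact pow_le_pow_left₀ (abs_nonneg _) (h i) 2

lemma realnvp_step {d : ℕ} (I : Finset (Fin d)) (S T : ℝ) (hS : 0 ≤ S)
    (s t : EuclideanSpace ℝ (Fin d))
    (hs_bound : ∀ i : Fin d, |s i| ≤ S) (ht_bound : ‖t‖ ≤ T)
    (X Y : EuclideanSpace ℝ (Fin d))
    (hout : ∀ j ∉ I, Y j = X j)
    (hin : ∀ i ∈ I, Y i = (X i - t i) * Real.exp (-(s i))) :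
    ‖Y‖ ≤ Real.exp S * (‖X‖ + T) := by
  set tI : EuclideanSpace ℝ (Fin d) := WithLp.toLp 2 (fun i => if i ∈ I then t i else 0) with htI
  set y : EuclideanSpace ℝ (Fin d) := WithLp.toLp 2 (fun i => X i - tI i) with hy
  have h1 : ‖Y‖ ≤ ‖Real.exp S • y‖ := by
    apply eucl_norm_mono
    intro i
    have hsmul : (Real.exp S • y) i = Real.exp S * y i := rfl
    rw [hsmul, abs_mul, abs_of_pos (Real.exp_pos S)]
    by_cases hi : i ∈ I
    · rw [hin i hi]
      have : y i = X i - t i := by simp [hy, htI, hi]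
      rw [this, abs_mul, abs_of_pos (Real.exp_pos _), mul_comm]
      apply mul_le_mul_of_nonneg_right _ (abs_nonneg _)
      exact Real.exp_le_exp.mpr (le_trans (neg_le_abs _) (by
        simpa using (abs_neg (s i)) ▸ (hs_bound i)))
    · rw [hout i hi]
      have : y i = X i := by simp [hy, htI, hi]
      rw [this]
      nlinarith [abs_nonneg (X i), Real.one_le_exp hS]
  have h2 : ‖y‖ ≤ ‖X‖ + T := by
    have hyeq : y = X - tI := rfl
    calc ‖y‖ ≤ ‖X‖ + ‖tI‖ := by rw [hyeq]; exact norm_sub_le _ _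
    _ ≤ ‖X‖ + T := by
        have : ‖tI‖ ≤ ‖t‖ := by
          apply eucl_norm_mono
          intro i
          by_cases hi : i ∈ I <;> simp [htI, hi, abs_nonneg]
        linarith
  calc ‖Y‖ ≤ ‖Real.exp S • y‖ := h1
  _ = Real.exp S * ‖y‖ := by rw [norm_smul, Real.norm_eq_abs, abs_of_pos (Real.exp_pos S)]
  _ ≤ Real.exp S * (‖X‖ + T) := mul_le_mul_of_nonneg_left h2 (le_of_lt (Real.exp_pos S))

/-- RealNVP lower bound (Lemma 1).  With inverse affine coupling layers `g ℓ`
(scaled index sets `I ℓ`, coordinatewise scale bounds `S ℓ`, translation norm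
bounds `T ℓ`, both nonnegative), put `x 0 = a`, `x (ℓ+1) = g ℓ (x ℓ)`, `u = x L`.
The flow log-density of `a`, i.e. the Gaussian base log-density of `u` plus the
sum of inverse-layer log-Jacobians `−∑_{i ∈ I ℓ} (s ℓ (x ℓ))_i`, is bounded below
by `−B`, where `B = (d/2)·log (2π) + U_max²/2 + ∑_{ℓ<L} |I ℓ|·S ℓ` and
`U_max = exp (∑_{ℓ<L} S ℓ)·(A_max + ∑_{ℓ<L} T ℓ)`, for every `a` with `‖a‖₂ ≤ A_max`. -/
theorem realnvp_log_density_lower_bound (d L : ℕ)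
    (I : ℕ → Finset (Fin d)) (S T : ℕ → ℝ)
    (hS : ∀ ℓ < L, 0 ≤ S ℓ) (hT : ∀ ℓ < L, 0 ≤ T ℓ)
    (s t : ℕ → EuclideanSpace ℝ (Fin d) → EuclideanSpace ℝ (Fin d))
    (hs_dep : ∀ ℓ < L, ∀ x y : EuclideanSpace ℝ (Fin d),
      (∀ j ∉ I ℓ, x j = y j) → s ℓ x = s ℓ y)
    (ht_dep : ∀ ℓ < L, ∀ x y : EuclideanSpace ℝ (Fin d),
      (∀ j ∉ I ℓ, x j = y j) → t ℓ x = t ℓ y)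
    (hs_bound : ∀ ℓ < L, ∀ x : EuclideanSpace ℝ (Fin d), ∀ i : Fin d, |s ℓ x i| ≤ S ℓ)
    (ht_bound : ∀ ℓ < L, ∀ x : EuclideanSpace ℝ (Fin d), ‖t ℓ x‖ ≤ T ℓ)
    (g : ℕ → EuclideanSpace ℝ (Fin d) → EuclideanSpace ℝ (Fin d))
    (hg_out : ∀ ℓ < L, ∀ x : EuclideanSpace ℝ (Fin d), ∀ j ∉ I ℓ, g ℓ x j = x j)
    (hg_in : ∀ ℓ < L, ∀ x : EuclideanSpace ℝ (Fin d), ∀ i ∈ I ℓ,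
      g ℓ x i = (x i - t ℓ x i) * Real.exp (-(s ℓ x i)))
    (A_max : ℝ) (a : EuclideanSpace ℝ (Fin d)) (ha : ‖a‖ ≤ A_max)
    (x : ℕ → EuclideanSpace ℝ (Fin d)) (hx0 : x 0 = a)
    (hxrec : ∀ ℓ < L, x (ℓ + 1) = g ℓ (x ℓ))
    (U_max B : ℝ)
    (hU : U_max = Real.exp (∑ ℓ ∈ Finset.range L, S ℓ) *
      (A_max + ∑ ℓ ∈ Finset.range L, T ℓ))
    (hB : B = (d : ℝ) / 2 * Real.log (2 * Real.pi) + U_max ^ 2 / 2 +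
      ∑ ℓ ∈ Finset.range L, ((I ℓ).card : ℝ) * S ℓ) :
    Real.log ((2 * Real.pi) ^ (-(d : ℝ) / 2) * Real.exp (-‖x L‖ ^ 2 / 2)) -
      ∑ ℓ ∈ Finset.range L, ∑ i ∈ I ℓ, s ℓ (x ℓ) i ≥ -B := by
  have hA : 0 ≤ A_max := le_trans (norm_nonneg a) ha
  -- norm bound by induction
  have hnorm : ∀ ℓ ≤ L, ‖x ℓ‖ ≤ Real.exp (∑ k ∈ Finset.range ℓ, S k) *
      (A_max + ∑ k ∈ Finset.range ℓ, T k) := by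
    intro ℓ
    induction ℓ with
    | zero => intro _; simp [hx0, ha]
    | succ n ih =>
      intro hn
      have hnL : n < L := hn
      have ihn := ih (le_of_lt hnL)
      have hstep : ‖x (n + 1)‖ ≤ Real.exp (S n) * (‖x n‖ + T n) := by
        apply realnvp_step (I n) (S n) (T n) (hS n hnL) (s n (x n)) (t n (x n))
          (hs_bound n hnL (x n)) (ht_bound n hnL (x n)) (x n)
        · intro j hj; rw [hxrec n hnL]; exact hg_out n hnL (x n) j hj
        · intro i hi; rw [hxrec n hnL]; exact hg_in n hnL (x n) i hi
      have hE1 : (1 : ℝ) ≤ Real.exp (∑ k ∈ Finset.range n, S k) :=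
        Real.one_le_exp (Finset.sum_nonneg fun k hk =>
          hS k (lt_of_lt_of_le (Finset.mem_range.mp hk) (le_of_lt hnL)))
      have hTsum : 0 ≤ ∑ k ∈ Finset.range n, T k :=
        Finset.sum_nonneg fun k hk =>
          hT k (lt_of_lt_of_le (Finset.mem_range.mp hk) (le_of_lt hnL))
      have hTn : 0 ≤ T n := hT n hnL
      calc ‖x (n + 1)‖ ≤ Real.exp (S n) * (‖x n‖ + T n) := hstep
      _ ≤ Real.exp (S n) * (Real.exp (∑ k ∈ Finset.range n, S k) *
            (A_max + ∑ k ∈ Finset.range n, T k) + T n) := by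
          apply mul_le_mul_of_nonneg_left _ (le_of_lt (Real.exp_pos _))
          linarith
      _ ≤ Real.exp (S n) * (Real.exp (∑ k ∈ Finset.range n, S k) *
            (A_max + (∑ k ∈ Finset.range n, T k) + T n)) := by
          apply mul_le_mul_of_nonneg_left _ (le_of_lt (Real.exp_pos _))
          nlinarith
      _ = Real.exp (∑ k ∈ Finset.range (n + 1), S k) *
            (A_max + ∑ k ∈ Finset.range (n + 1), T k) := by
          rw [Finset.sum_range_succ, Finset.sum_range_succ, Real.exp_add]
          ring
  have hu : ‖x L‖ ≤ U_max := hU ▸ hnorm L le_rfl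
  have hu2 : ‖x L‖ ^ 2 ≤ U_max ^ 2 := pow_le_pow_left₀ (norm_nonneg _) hu 2
  -- bound the log-Jacobian sum
  have hsum : ∑ ℓ ∈ Finset.range L, ∑ i ∈ I ℓ, s ℓ (x ℓ) i ≤
      ∑ ℓ ∈ Finset.range L, ((I ℓ).card : ℝ) * S ℓ := by
    apply Finset.sum_le_sum
    intro ℓ hℓ
    have hℓL : ℓ < L := Finset.mem_range.mp hℓ
    calc ∑ i ∈ I ℓ, s ℓ (x ℓ) i ≤ ∑ i ∈ I ℓ, S ℓ :=
        Finset.sum_le_sum fun i _ => le_trans (le_abs_self _) (hs_bound ℓ hℓL (x ℓ) i)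
    _ = ((I ℓ).card : ℝ) * S ℓ := by rw [Finset.sum_const, nsmul_eq_mul]
  -- compute the log
  have h2pi : (0 : ℝ) < 2 * Real.pi := by positivity
  have hlog : Real.log ((2 * Real.pi) ^ (-(d : ℝ) / 2) * Real.exp (-‖x L‖ ^ 2 / 2)) =
      -(d : ℝ) / 2 * Real.log (2 * Real.pi) + (-‖x L‖ ^ 2 / 2) := by
    rw [Real.log_mul (ne_of_gt (Real.rpow_pos_of_pos h2pi _)) (Real.exp_ne_zero _),
      Real.log_rpow h2pi, Real.log_exp]
  rw [hlog, hB]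
  linarith
end

section
/- (ERM implies weighted KL control.) Let (S, ρ) be a probability space of states, λ a σ-finite measure on an action space, and for ρ-almost every s let p(·|s) be a probability density, w(·,s) a nonnegative weight with 0 < Z(s) := ∫ w(a,s)·p(a|s) dλ(a) < ∞, and q(a|s) := w(a,s)·p(a|s)/Z(s). For conditional probability densities π define J(π) := ∫ ( ∫ w(a,s)·p(a|s)·Real.log π(a|s) dλ(a) ) dρ(s), and let Ĵ : Π → ℝ be any function on a class Π of conditional densities containing q. If π̂ ∈ Π satisfies Ĵ(π̂) = ⨆_{π∈Π} Ĵ(π) and ⨆_{π∈Π} |J(π) − Ĵ(π)| ≤ ε, then ∫ Z(s) · KL( q(·|s) ‖ π̂(·|s) ) dρ(s) ≤ 2·ε. -/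
open MeasureTheory

/-- ERM implies weighted KL control.  States `s ~ ρ`; for a.e. state, `p(·|s)` is
a behavior density w.r.t. `λ`, `w(·|s) ≥ 0` a weight with partition function
`Z s = ∫ w·p dλ ∈ (0,∞)`, and `q(·|s) = w·p/Z s` the tilted density.  For
conditional densities `π` in a class `Π` containing `q`, let
`J π = ∫ (∫ w·p·log π dλ) dρ` and let `Ĵ` be any empirical objective.  If
`π̂ ∈ Π` maximizes `Ĵ` over `Π` and `|J π − Ĵ π| ≤ ε` uniformly on `Π`, then
`∫ Z s · KL(q(·|s)‖π̂(·|s)) dρ ≤ 2ε`, where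
`KL(q(·|s)‖π) = ∫ q·log (q/π) dλ`. -/
theorem erm_implies_weighted_kl_control {S α : Type*}
    [MeasurableSpace S] [MeasurableSpace α]
    (ρ : Measure S) [IsProbabilityMeasure ρ]
    (lam : Measure α) [SigmaFinite lam]
    (p w : S → α → ℝ)
    (hp : ∀ᵐ s ∂ρ, (∀ a, 0 ≤ p s a) ∧
      Integrable (fun a => p s a) lam ∧ (∫ a, p s a ∂lam = 1))
    (hw : ∀ s, ∀ a, 0 ≤ w s a)
    (Z : S → ℝ)
    (hZ : ∀ᵐ s ∂ρ, Integrable (fun a => w s a * p s a) lam ∧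
      Z s = ∫ a, w s a * p s a ∂lam ∧ 0 < Z s)
    (q : S → α → ℝ) (hq : ∀ s, ∀ a, q s a = w s a * p s a / Z s)
    (Pi : Set (S → α → ℝ))
    (hPi : ∀ π ∈ Pi, ∀ᵐ s ∂ρ, (∀ a, 0 ≤ π s a) ∧
      (∫ a, π s a ∂lam = 1) ∧
      Integrable (fun a => w s a * p s a * Real.log (π s a)) lam ∧
      (∀ᵐ a ∂lam, π s a = 0 → w s a * p s a = 0))
    (hPi_int : ∀ π ∈ Pi,
      Integrable (fun s => ∫ a, w s a * p s a * Real.log (π s a) ∂lam) ρ)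
    (hqPi : q ∈ Pi)
    (J Jhat : (S → α → ℝ) → ℝ)
    (hJ : ∀ π ∈ Pi,
      J π = ∫ s, (∫ a, w s a * p s a * Real.log (π s a) ∂lam) ∂ρ)
    (πhat : S → α → ℝ) (hπhat : πhat ∈ Pi)
    (hmax : ∀ π ∈ Pi, Jhat π ≤ Jhat πhat)
    (ε : ℝ) (hdev : ∀ π ∈ Pi, |J π - Jhat π| ≤ ε) :
    ∫ s, Z s * ∫ a, q s a * Real.log (q s a / πhat s a) ∂lam ∂ρ ≤ 2 * ε := by
  have hq' := hPi q hqPi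
  have hπ' := hPi πhat hπhat
  have key : ∀ᵐ s ∂ρ,
      Z s * ∫ a, q s a * Real.log (q s a / πhat s a) ∂lam
        = (∫ a, w s a * p s a * Real.log (q s a) ∂lam)
          - ∫ a, w s a * p s a * Real.log (πhat s a) ∂lam := by
    filter_upwards [hp, hZ, hq', hπ'] with s hps hZs hqs hπs
    obtain ⟨hwpint, hZeq, hZpos⟩ := hZs
    obtain ⟨_, _, hintq, _⟩ := hqs
    obtain ⟨_, _, hintπ, hzero⟩ := hπs
    rw [← integral_const_mul, ← integral_sub hintq hintπ]
    apply integral_congr_ae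
    filter_upwards [hzero] with a ha
    rw [hq s a]
    by_cases hwp : w s a * p s a = 0
    · simp [hwp]
    · have hπpos : πhat s a ≠ 0 := fun h => hwp (ha h)
      have hqne : w s a * p s a / Z s ≠ 0 := div_ne_zero hwp hZpos.ne'
      rw [Real.log_div hqne hπpos]
      field_simp
  have heq : ∫ s, Z s * ∫ a, q s a * Real.log (q s a / πhat s a) ∂lam ∂ρ
      = J q - J πhat := by
    rw [hJ q hqPi, hJ πhat hπhat,
      ← integral_sub (hPi_int q hqPi) (hPi_int πhat hπhat)]
    exact integral_congr_ae key
  rw [heq]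
  have h1 := abs_le.mp (hdev q hqPi)
  have h2 := abs_le.mp (hdev πhat hπhat)
  have h3 := hmax q hqPi
  linarith [h1.1, h1.2, h2.1, h2.2]
end

section
/- (KL Divergence Bound for RealNVP policies, combined form.) Let d L : ℕ, and for ℓ < L let I_ℓ ⊆ Fin d with d_ℓ = |I_ℓ|, and let s_ℓ, t_ℓ : EuclideanSpace ℝ (Fin d) → EuclideanSpace ℝ (Fin d) depend only on coordinates outside I_ℓ with |s_ℓ(x)_i| ≤ S_ℓ and ‖t_ℓ(x)‖₂ ≤ T_ℓ for all x (S_ℓ, T_ℓ ≥ 0). Let g_ℓ be the corresponding inverse affine coupling layers, x⁽⁰⁾(a) = a, x⁽ℓ⁺¹⁾(a) = g_ℓ x⁽ℓ⁾(a), u(a) = x⁽ᴸ⁾(a). Suppose π_θ is a probability density on EuclideanSpace ℝ (Fin d) with respect to Lebesgue measure satisfying the change-of-variables formula Real.log (π_θ a) = Real.log ((2π)^(−(d:ℝ)/2) · Real.exp (−‖u(a)‖₂²/2)) − ∑_{ℓ<L} ∑_{i∈I_ℓ} (s_ℓ x⁽ℓ⁾(a))_i for all a. Let π^b be a probability density with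 π^b ≤ M almost everywhere for some 1 ≤ M < ∞, supported in the ball {a : ‖a‖₂ ≤ A_max}. Then KL(π^b ‖ π_θ) ≤ B + Real.log M, where B = (d/2)·Real.log (2π) + U_max²/2 + ∑_{ℓ<L} d_ℓ·S_ℓ and U_max = Real.exp (∑_{ℓ<L} S_ℓ)·(A_max + ∑_{ℓ<L} T_ℓ). -/
open MeasureTheory
open scoped BigOperators

lemma euclid_norm_mono {n : ℕ} (v w : EuclideanSpace ℝ (Fin n)) (h : ∀ i, |v i| ≤ |w i|) :
    ‖v‖ ≤ ‖w‖ := by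
  rw [EuclideanSpace.norm_eq, EuclideanSpace.norm_eq]
  apply Real.sqrt_le_sqrt
  refine Finset.sum_le_sum fun i _ => ?_
  rw [Real.norm_eq_abs, Real.norm_eq_abs]
  exact pow_le_pow_left₀ (abs_nonneg _) (h i) 2

lemma euclid_norm_abs {n : ℕ} (v w : EuclideanSpace ℝ (Fin n)) (h : ∀ i, w i = |v i|) :
    ‖w‖ = ‖v‖ := by
  rw [EuclideanSpace.norm_eq, EuclideanSpace.norm_eq]
  congr 1
  refine Finset.sum_congr rfl fun i _ => ?_
  rw [h i, Real.norm_eq_abs, Real.norm_eq_abs, abs_abs]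

/-- KL Divergence Bound for RealNVP policies (combined form).  With inverse
affine coupling layers `g ℓ` (scaled index sets `I ℓ`, scale bounds `S ℓ ≥ 0`,
translation norm bounds `T ℓ ≥ 0`), layer iterates `x 0 a = a`,
`x (ℓ+1) a = g ℓ (x ℓ a)`, `u a = x L a`, suppose the learned density `π_θ`
(w.r.t. Lebesgue measure) satisfies the change-of-variables formula
`log π_θ a = log ((2π)^(−d/2)·exp (−‖u a‖²/2)) − ∑_{ℓ<L} ∑_{i∈I ℓ} (s ℓ (x ℓ a))_i`.
If the behavior density `π_b` satisfies `π_b ≤ M` a.e. (`1 ≤ M < ∞`) and is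
supported in `{a : ‖a‖ ≤ A_max}`, then
`KL(π_b‖π_θ) = ∫ π_b·log (π_b/π_θ) ≤ B + log M`, with
`B = (d/2)·log (2π) + U_max²/2 + ∑_{ℓ<L} |I ℓ|·S ℓ` and
`U_max = exp (∑_{ℓ<L} S ℓ)·(A_max + ∑_{ℓ<L} T ℓ)`. -/
theorem realnvp_kl_divergence_bound (d L : ℕ)
    (I : ℕ → Finset (Fin d)) (S T : ℕ → ℝ)
    (hS : ∀ ℓ < L, 0 ≤ S ℓ) (hT : ∀ ℓ < L, 0 ≤ T ℓ)
    (s t : ℕ → EuclideanSpace ℝ (Fin d) → EuclideanSpace ℝ (Fin d))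
    (hs_dep : ∀ ℓ < L, ∀ x y : EuclideanSpace ℝ (Fin d),
      (∀ j ∉ I ℓ, x j = y j) → s ℓ x = s ℓ y)
    (ht_dep : ∀ ℓ < L, ∀ x y : EuclideanSpace ℝ (Fin d),
      (∀ j ∉ I ℓ, x j = y j) → t ℓ x = t ℓ y)
    (hs_bound : ∀ ℓ < L, ∀ x : EuclideanSpace ℝ (Fin d), ∀ i : Fin d, |s ℓ x i| ≤ S ℓ)
    (ht_bound : ∀ ℓ < L, ∀ x : EuclideanSpace ℝ (Fin d), ‖t ℓ x‖ ≤ T ℓ)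
    (g : ℕ → EuclideanSpace ℝ (Fin d) → EuclideanSpace ℝ (Fin d))
    (hg_out : ∀ ℓ < L, ∀ x : EuclideanSpace ℝ (Fin d), ∀ j ∉ I ℓ, g ℓ x j = x j)
    (hg_in : ∀ ℓ < L, ∀ x : EuclideanSpace ℝ (Fin d), ∀ i ∈ I ℓ,
      g ℓ x i = (x i - t ℓ x i) * Real.exp (-(s ℓ x i)))
    (x : ℕ → EuclideanSpace ℝ (Fin d) → EuclideanSpace ℝ (Fin d))
    (hx0 : ∀ a, x 0 a = a)
    (hxrec : ∀ ℓ < L, ∀ a, x (ℓ + 1) a = g ℓ (x ℓ a))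
    (A_max U_max B M : ℝ) (hM : 1 ≤ M)
    (hU : U_max = Real.exp (∑ ℓ ∈ Finset.range L, S ℓ) *
      (A_max + ∑ ℓ ∈ Finset.range L, T ℓ))
    (hB : B = (d : ℝ) / 2 * Real.log (2 * Real.pi) + U_max ^ 2 / 2 +
      ∑ ℓ ∈ Finset.range L, ((I ℓ).card : ℝ) * S ℓ)
    (πθ πb : EuclideanSpace ℝ (Fin d) → ℝ)
    (hπθ_meas : Measurable πθ) (hπθ_nonneg : ∀ a, 0 ≤ πθ a)
    (hπθ_prob : ∫ a, πθ a = 1)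
    (hπθ_log : ∀ a, Real.log (πθ a) =
      Real.log ((2 * Real.pi) ^ (-(d : ℝ) / 2) * Real.exp (-‖x L a‖ ^ 2 / 2)) -
        ∑ ℓ ∈ Finset.range L, ∑ i ∈ I ℓ, s ℓ (x ℓ a) i)
    (hπb_meas : Measurable πb) (hπb_nonneg : ∀ a, 0 ≤ πb a)
    (hπb_prob : ∫ a, πb a = 1)
    (hπb_cap : ∀ᵐ a : EuclideanSpace ℝ (Fin d), πb a ≤ M)
    (hπb_supp : ∀ᵐ a : EuclideanSpace ℝ (Fin d), A_max < ‖a‖ → πb a = 0) :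
    ∫ a, πb a * Real.log (πb a / πθ a) ≤ B + Real.log M := by
  -- nonnegativity of B + log M
  have hlog2pi : 0 ≤ Real.log (2 * Real.pi) := by
    apply Real.log_nonneg
    nlinarith [Real.pi_gt_three]
  have hBnonneg : 0 ≤ B := by
    rw [hB]
    have h1 : 0 ≤ (d : ℝ) / 2 * Real.log (2 * Real.pi) := by positivity
    have h2 : 0 ≤ U_max ^ 2 / 2 := by positivity
    have h3 : 0 ≤ ∑ ℓ ∈ Finset.range L, ((I ℓ).card : ℝ) * S ℓ := by
      refine Finset.sum_nonneg fun ℓ hℓ => ?_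
      exact mul_nonneg (Nat.cast_nonneg _) (hS ℓ (Finset.mem_range.mp hℓ))
    linarith
  have hBM : 0 ≤ B + Real.log M := by
    have := Real.log_nonneg hM
    linarith
  -- layer norm bound
  have hlayer : ∀ ℓ < L, ∀ y : EuclideanSpace ℝ (Fin d),
      ‖g ℓ y‖ ≤ Real.exp (S ℓ) * (‖y‖ + T ℓ) := by
    intro ℓ hℓ y
    set ya : EuclideanSpace ℝ (Fin d) :=
      (WithLp.equiv 2 (Fin d → ℝ)).symm (fun i => |y i|) with hya
    set ta : EuclideanSpace ℝ (Fin d) :=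
      (WithLp.equiv 2 (Fin d → ℝ)).symm (fun i => |t ℓ y i|) with hta
    have hya_app : ∀ i, ya i = |y i| := fun i => rfl
    have hta_app : ∀ i, ta i = |t ℓ y i| := fun i => rfl
    have hexp1 : (1 : ℝ) ≤ Real.exp (S ℓ) := Real.one_le_exp (hS ℓ hℓ)
    have h1 : ‖g ℓ y‖ ≤ ‖Real.exp (S ℓ) • (ya + ta)‖ := by
      apply euclid_norm_mono
      intro i
      have happ : (Real.exp (S ℓ) • (ya + ta)) i = Real.exp (S ℓ) * (|y i| + |t ℓ y i|) := rfl
      have hyi : (0:ℝ) ≤ |y i| := abs_nonneg _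
      have hti : (0:ℝ) ≤ |t ℓ y i| := abs_nonneg _
      have hnn : (0:ℝ) ≤ Real.exp (S ℓ) * (|y i| + |t ℓ y i|) :=
        mul_nonneg (Real.exp_pos _).le (by linarith)
      rw [happ, abs_of_nonneg hnn]
      by_cases hi : i ∈ I ℓ
      · rw [hg_in ℓ hℓ y i hi]
        rw [abs_mul, abs_of_pos (Real.exp_pos _)]
        have hst : Real.exp (-(s ℓ y i)) ≤ Real.exp (S ℓ) := by
          apply Real.exp_le_exp.mpr
          have := hs_bound ℓ hℓ y i
          have := neg_abs_le (s ℓ y i)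
          linarith
        have habs : |y i - t ℓ y i| ≤ |y i| + |t ℓ y i| := abs_sub _ _
        calc |y i - t ℓ y i| * Real.exp (-(s ℓ y i))
            ≤ (|y i| + |t ℓ y i|) * Real.exp (S ℓ) := by
              apply mul_le_mul habs hst (Real.exp_pos _).le (by linarith)
          _ = Real.exp (S ℓ) * (|y i| + |t ℓ y i|) := by ring
      · rw [hg_out ℓ hℓ y i hi]
        have := le_abs_self (y i)
        nlinarith
    have h2 : ‖Real.exp (S ℓ) • (ya + ta)‖ = Real.exp (S ℓ) * ‖ya + ta‖ := by
      rw [norm_smul, Real.norm_eq_abs, abs_of_pos (Real.exp_pos _)]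
    have h3 : ‖ya + ta‖ ≤ ‖y‖ + T ℓ := by
      have := norm_add_le ya ta
      have hy' : ‖ya‖ = ‖y‖ := euclid_norm_abs y ya hya_app
      have ht' : ‖ta‖ = ‖t ℓ y‖ := euclid_norm_abs (t ℓ y) ta hta_app
      have := ht_bound ℓ hℓ y
      linarith
    calc ‖g ℓ y‖ ≤ Real.exp (S ℓ) * ‖ya + ta‖ := by rw [← h2]; exact h1
      _ ≤ Real.exp (S ℓ) * (‖y‖ + T ℓ) := by
          apply mul_le_mul_of_nonneg_left h3 (Real.exp_pos _).le
  -- iterate norm bound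
  have hxbound : ∀ a : EuclideanSpace ℝ (Fin d), ‖a‖ ≤ A_max → ∀ ℓ, ℓ ≤ L →
      ‖x ℓ a‖ ≤ Real.exp (∑ k ∈ Finset.range ℓ, S k) *
        (A_max + ∑ k ∈ Finset.range ℓ, T k) := by
    intro a ha ℓ
    have hA0 : 0 ≤ A_max := le_trans (norm_nonneg a) ha
    induction ℓ with
    | zero => intro _; simpa [hx0 a] using ha
    | succ ℓ ih =>
        intro hℓL
        have hℓ : ℓ < L := hℓL
        have ih' := ih hℓ.le
        have hTsum : 0 ≤ ∑ k ∈ Finset.range ℓ, T k :=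
          Finset.sum_nonneg fun k hk => hT k (lt_of_lt_of_le (Finset.mem_range.mp hk) hℓ.le)
        have hE : (1 : ℝ) ≤ Real.exp (∑ k ∈ Finset.range ℓ, S k) :=
          Real.one_le_exp (Finset.sum_nonneg fun k hk =>
            hS k (lt_of_lt_of_le (Finset.mem_range.mp hk) hℓ.le))
        rw [hxrec ℓ hℓ a]
        calc ‖g ℓ (x ℓ a)‖ ≤ Real.exp (S ℓ) * (‖x ℓ a‖ + T ℓ) := hlayer ℓ hℓ (x ℓ a)
          _ ≤ Real.exp (S ℓ) * (Real.exp (∑ k ∈ Finset.range ℓ, S k) *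
              (A_max + ∑ k ∈ Finset.range ℓ, T k) + T ℓ) := by
                apply mul_le_mul_of_nonneg_left (by linarith) (Real.exp_pos _).le
          _ ≤ Real.exp (∑ k ∈ Finset.range (ℓ + 1), S k) *
              (A_max + ∑ k ∈ Finset.range (ℓ + 1), T k) := by
                rw [Finset.sum_range_succ, Finset.sum_range_succ, Real.exp_add]
                have hTl := hT ℓ hℓ
                have hkey : 0 ≤ Real.exp (S ℓ) * T ℓ *
                    (Real.exp (∑ k ∈ Finset.range ℓ, S k) - 1) :=
                  mul_nonneg (mul_nonneg (Real.exp_pos _).le hTl) (by linarith)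
                nlinarith [hkey]
  -- log πθ expansion
  have hlogθ : ∀ a, Real.log (πθ a) =
      (-(d : ℝ) / 2) * Real.log (2 * Real.pi) + (-‖x L a‖ ^ 2 / 2) -
        ∑ ℓ ∈ Finset.range L, ∑ i ∈ I ℓ, s ℓ (x ℓ a) i := by
    intro a
    rw [hπθ_log a, Real.log_mul (ne_of_gt (Real.rpow_pos_of_pos Real.two_pi_pos _))
      (Real.exp_ne_zero _), Real.log_rpow Real.two_pi_pos, Real.log_exp]
  -- sum bound
  have hssum : ∀ a, ∑ ℓ ∈ Finset.range L, ∑ i ∈ I ℓ, s ℓ (x ℓ a) i ≤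
      ∑ ℓ ∈ Finset.range L, ((I ℓ).card : ℝ) * S ℓ := by
    intro a
    refine Finset.sum_le_sum fun ℓ hℓ => ?_
    have hℓ' := Finset.mem_range.mp hℓ
    calc ∑ i ∈ I ℓ, s ℓ (x ℓ a) i ≤ ∑ i ∈ I ℓ, S ℓ :=
          Finset.sum_le_sum fun i _ =>
            le_trans (le_abs_self _) (hs_bound ℓ hℓ' (x ℓ a) i)
      _ = ((I ℓ).card : ℝ) * S ℓ := by rw [Finset.sum_const, nsmul_eq_mul]
  -- pointwise a.e. bound
  have key : ∀ᵐ a : EuclideanSpace ℝ (Fin d),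
      πb a * Real.log (πb a / πθ a) ≤ πb a * (B + Real.log M) := by
    filter_upwards [hπb_cap, hπb_supp] with a hcap hsupp
    rcases eq_or_lt_of_le (hπb_nonneg a) with hb | hb
    · simp [← hb]
    · have hA : ‖a‖ ≤ A_max := by
        by_contra h
        push_neg at h
        exact hb.ne' (hsupp h)
      by_cases hθ : πθ a = 0
      · rw [hθ, div_zero, Real.log_zero, mul_zero]
        exact mul_nonneg hb.le hBM
      · have hθpos : 0 < πθ a := lt_of_le_of_ne (hπθ_nonneg a) (Ne.symm hθ)
        rw [Real.log_div hb.ne' hθ]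
        have h1 : Real.log (πb a) ≤ Real.log M := Real.log_le_log hb hcap
        have hxL : ‖x L a‖ ≤ U_max := by
          rw [hU]; exact hxbound a hA L le_rfl
        have hsq : ‖x L a‖ ^ 2 ≤ U_max ^ 2 :=
          pow_le_pow_left₀ (norm_nonneg _) hxL 2
        have h2 : -Real.log (πθ a) ≤ B := by
          rw [hlogθ a, hB]
          have := hssum a
          linarith
        have h3 : Real.log (πb a) - Real.log (πθ a) ≤ B + Real.log M := by linarith
        exact mul_le_mul_of_nonneg_left h3 hb.le
  -- integrate
  have hπb_int : Integrable πb := by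
    by_contra h
    rw [integral_undef h] at hπb_prob
    norm_num at hπb_prob
  have hg_int : Integrable (fun a => πb a * (B + Real.log M)) :=
    hπb_int.mul_const _
  by_cases hf : Integrable (fun a : EuclideanSpace ℝ (Fin d) =>
      πb a * Real.log (πb a / πθ a))
  · calc ∫ a, πb a * Real.log (πb a / πθ a)
        ≤ ∫ a, πb a * (B + Real.log M) := integral_mono_ae hf hg_int key
      _ = (∫ a, πb a) * (B + Real.log M) := by rw [integral_mul_const]
      _ = B + Real.log M := by rw [hπb_prob, one_mul]
  · rw [integral_undef hf]
    exact hBM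
end
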